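/- Let J be a stable monomial ideal in K[x_1,...,x_n] with Hilbert function H of R/J, and suppose ℓ is an integer such that no monomial of degree ℓ outside J lies in K[x_1,...,x_{n-1}]. Then for every t ≥ ℓ: (i) no monomial of degree t outside J lies in K[x_1,...,x_{n-1}], and (ii) H(t) ≥ H(t+1). -/
import Mathlib


open Finset

/-- Total degree of a monomial (exponent vector). -/
def mdeg {n : ℕ} (α : Fin n →₀ ℕ) : ℕ := α.sum fun _ e => e

/-- A set of exponent vectors is the set of monomials of a monomial ideal. -/
def IsMonIdeal {n : ℕ} (S : Set (Fin n →₀ ℕ)) : Prop :=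
  ∀ α ∈ S, ∀ β : Fin n →₀ ℕ, α + β ∈ S

/-- `α` is a minimal monomial generator of the monomial ideal with monomials `S`. -/
def MinGen {n : ℕ} (S : Set (Fin n →₀ ℕ)) (α : Fin n →₀ ℕ) : Prop :=
  α ∈ S ∧ ∀ β ∈ S, β ≤ α → β = α

/-- Stable monomial ideal (variables ordered `x_1 ≻ ⋯ ≻ x_n`, i.e. index `0` largest). -/
def IsStable {n : ℕ} (S : Set (Fin n →₀ ℕ)) : Prop :=
  ∀ α ∈ S, ∀ m ∈ α.support, (∀ k ∈ α.support, k ≤ m) →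
    ∀ i : Fin n, i < m → α - Finsupp.single m 1 + Finsupp.single i 1 ∈ S

def IsStronglyStable {n : ℕ} (S : Set (Fin n →₀ ℕ)) : Prop :=
  ∀ α ∈ S, ∀ i ∈ α.support, ∀ j : Fin n, j < i →
    α - Finsupp.single i 1 + Finsupp.single j 1 ∈ S

/-- `drlLT α β` : `α` is smaller than `β` in degrevlex with `x_1 ≻ ⋯ ≻ x_n`. -/
def drlLT {n : ℕ} (α β : Fin n →₀ ℕ) : Prop :=
  mdeg α < mdeg β ∨ (mdeg α = mdeg β ∧ ∃ i : Fin n, β i < α i ∧ ∀ j : Fin n, i < j → α j = β j)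

def IsAlmostRevLex {n : ℕ} (S : Set (Fin n →₀ ℕ)) : Prop :=
  IsMonIdeal S ∧ ∀ α, MinGen S α → ∀ β : Fin n →₀ ℕ, mdeg β = mdeg α → drlLT α β → β ∈ S

/-- Combinatorial Hilbert function of `R/J`: number of degree-`t` monomials outside `S`. -/
noncomputable def hilbC {n : ℕ} (S : Set (Fin n →₀ ℕ)) (t : ℕ) : ℕ :=
  {α : Fin n →₀ ℕ | mdeg α = t ∧ α ∉ S}.ncard

/-- `fdiff H s t` is `Δ^s H (t)` with the convention `Δ^s H (0) = 1` for `s ≥ 1`. -/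
def fdiff (H : ℕ → ℕ) : ℕ → ℕ → ℤ
  | 0, t => H t
  | _+1, 0 => 1
  | s+1, t+1 => fdiff H s (t+1) - fdiff H s t

lemma mdeg_eq_sum {n : ℕ} (α : Fin n →₀ ℕ) : mdeg α = ∑ i, α i :=
  Finsupp.sum_fintype _ _ (fun _ => rfl)

lemma mdeg_add' {n : ℕ} (α β : Fin n →₀ ℕ) : mdeg (α + β) = mdeg α + mdeg β := by
  simp [mdeg_eq_sum, Finset.sum_add_distrib]

lemma mdeg_single {n : ℕ} (m : Fin n) : mdeg (Finsupp.single m 1) = 1 := by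
  simp [mdeg, Finsupp.sum_single_index]

lemma finite_deg {n t : ℕ} : {α : Fin n →₀ ℕ | mdeg α = t}.Finite := by
  have h : {α : Fin n →₀ ℕ | mdeg α = t}
      = (⇑) ⁻¹' ↑(Finset.Nat.antidiagonalTuple n t) := by
    ext α
    simp [mdeg_eq_sum, Finset.Nat.mem_antidiagonalTuple]
  rw [h]
  exact (Finset.Nat.antidiagonalTuple n t).finite_toSet.preimage
    (DFunLike.coe_injective.injOn)

lemma sub_single_props {n : ℕ} {α : Fin n →₀ ℕ} {m : Fin n} (hm : α m ≠ 0) :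
    (α - Finsupp.single m 1) + Finsupp.single m 1 = α ∧
      mdeg (α - Finsupp.single m 1) + 1 = mdeg α := by
  have hle : Finsupp.single m 1 ≤ α :=
    Finsupp.single_le_iff.mpr (Nat.one_le_iff_ne_zero.mpr hm)
  have hadd : (α - Finsupp.single m 1) + Finsupp.single m 1 = α :=
    tsub_add_cancel_of_le hle
  refine ⟨hadd, ?_⟩
  have := mdeg_add' (α - Finsupp.single m 1) (Finsupp.single m 1)
  rw [hadd, mdeg_single] at this
  omega

lemma div_step {n : ℕ} (S : Set (Fin (n + 1) →₀ ℕ)) (hmon : IsMonIdeal S) (t : ℕ)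
    (h : ∀ α : Fin (n + 1) →₀ ℕ, mdeg α = t → α ∉ S → α (Fin.last n) ≠ 0) :
    ∀ α : Fin (n + 1) →₀ ℕ, mdeg α = t + 1 → α ∉ S → α (Fin.last n) ≠ 0 := by
  intro α hdeg hα hlast
  have hne : α.support.Nonempty := by
    rw [Finsupp.support_nonempty_iff]
    intro h0
    simp [h0, mdeg] at hdeg
  obtain ⟨m, hm⟩ := hne
  have hm' : α m ≠ 0 := Finsupp.mem_support_iff.mp hm
  obtain ⟨hadd, hdeg'⟩ := sub_single_props hm'
  set β := α - Finsupp.single m 1 with hβ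
  have hβdeg : mdeg β = t := by omega
  have hβS : β ∉ S := fun hmem => hα (hadd ▸ hmon β hmem (Finsupp.single m 1))
  apply h β hβdeg hβS
  simp [hβ, Finsupp.tsub_apply, hlast]

lemma count_step {n : ℕ} (S : Set (Fin (n + 1) →₀ ℕ)) (hmon : IsMonIdeal S) (t : ℕ)
    (h : ∀ α : Fin (n + 1) →₀ ℕ, mdeg α = t + 1 → α ∉ S → α (Fin.last n) ≠ 0) :
    hilbC S (t + 1) ≤ hilbC S t := by
  classical
  set A := {α : Fin (n + 1) →₀ ℕ | mdeg α = t + 1 ∧ α ∉ S} with hA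
  set B := {α : Fin (n + 1) →₀ ℕ | mdeg α = t ∧ α ∉ S} with hB
  set f : (Fin (n + 1) →₀ ℕ) → (Fin (n + 1) →₀ ℕ) :=
    fun α => α - Finsupp.single (Fin.last n) 1 with hf
  have hrec : ∀ α ∈ A, f α + Finsupp.single (Fin.last n) 1 = α ∧ mdeg (f α) = t := by
    intro α hα
    have hlast : α (Fin.last n) ≠ 0 := h α hα.1 hα.2
    obtain ⟨hadd, hdeg⟩ := sub_single_props hlast
    refine ⟨hadd, ?_⟩
    have h1 := hα.1
    simp only [hf]
    omega
  have hinj : Set.InjOn f A := by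
    intro a ha b hb hab
    have h1 := (hrec a ha).1
    have h2 := (hrec b hb).1
    rw [← h1, ← h2, hab]
  have hmaps : f '' A ⊆ B := by
    rintro _ ⟨α, hα, rfl⟩
    refine ⟨(hrec α hα).2, fun hmem => hα.2 ?_⟩
    have := hmon (f α) hmem (Finsupp.single (Fin.last n) 1)
    rwa [(hrec α hα).1] at this
  have hBfin : B.Finite := finite_deg.subset (fun α hα => hα.1)
  calc hilbC S (t + 1) = A.ncard := rfl
    _ = (f '' A).ncard := (Set.ncard_image_of_injOn hinj).symm
    _ ≤ B.ncard := Set.ncard_le_ncard hmaps hBfin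
    _ = hilbC S t := rfl

/-- Let `J` be a stable monomial ideal in `n+1` variables `x_1 ≻ ⋯ ≻ x_{n+1}` with Hilbert
function `H` of `R/J`.  If every monomial of degree `ℓ` outside `J` is divisible by the last
variable `x_{n+1}`, then for every `t ≥ ℓ` every monomial of degree `t` outside `J` is
divisible by the last variable, and `H(t) ≥ H(t+1)`. -/
theorem stable_decreasing_from_ell {n : ℕ}
    (S : Set (Fin (n + 1) →₀ ℕ)) (hmon : IsMonIdeal S) (hS : IsStable S) (ℓ : ℕ)
    (hℓ : ∀ α : Fin (n + 1) →₀ ℕ, mdeg α = ℓ → α ∉ S → α (Fin.last n) ≠ 0) :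
    ∀ t, ℓ ≤ t →
      (∀ α : Fin (n + 1) →₀ ℕ, mdeg α = t → α ∉ S → α (Fin.last n) ≠ 0) ∧
      hilbC S (t + 1) ≤ hilbC S t := by
  intro t ht
  induction t, ht using Nat.le_induction with
  | base => exact ⟨hℓ, count_step S hmon ℓ (div_step S hmon ℓ hℓ)⟩
  | succ t ht ih =>
    have hdiv := div_step S hmon t ih.1
    exact ⟨hdiv, count_step S hmon (t + 1) (div_step S hmon (t + 1) hdiv)⟩
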